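/- arXiv:2410.00611 — 5 statements merged into one kernel-verified Lean document; each statement's English description precedes it below -/
import Mathlib

section
/- Let p be a prime, n, m positive integers, and F : 𝔽_p^n → 𝔽_p^m any function. For each β ∈ 𝔽_p^m with |F⁻¹(β)| > 0 one has p^n/|im(F)| − Ξ(F) ≤ |F⁻¹(β)| ≤ p^n/|im(F)| + Ξ(F). Moreover, if some β attains one of these two bounds with equality, then |F⁻¹(α)| = (p^n − |F⁻¹(β)|)/(|im(F)| − 1) for every α ∈ im(F) with α ≠ β. -/
open Finset

/-- The Walsh transform of `F : 𝔽_p^n → 𝔽_p^m` at `(b, a)`. -/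
noncomputable def walsh (p n m : ℕ) [NeZero p] (F : (Fin n → ZMod p) → (Fin m → ZMod p))
    (b : Fin m → ZMod p) (a : Fin n → ZMod p) : ℂ :=
  ∑ x : Fin n → ZMod p,
    Complex.exp (2 * Real.pi * Complex.I *
      ((((∑ i, b i * F x i) - ∑ i, a i * x i).val : ℤ) : ℂ) / p)

/-- The imbalance `Nb_F = p^{-m} ∑_{b ≠ 0} |W_F(b,0)|²`. -/
noncomputable def imbalance (p n m : ℕ) [NeZero p]
    (F : (Fin n → ZMod p) → (Fin m → ZMod p)) : ℝ :=
  ((p : ℝ) ^ m)⁻¹ *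
    ∑ b ∈ univ.filter (fun b : Fin m → ZMod p => b ≠ 0),
      ‖walsh p n m F b 0‖ ^ 2

/-- The size of the preimage set `F⁻¹(β)`. -/
def fiberCard (p n m : ℕ) [NeZero p] (F : (Fin n → ZMod p) → (Fin m → ZMod p))
    (β : Fin m → ZMod p) : ℕ :=
  (univ.filter fun x => F x = β).card

/-- The size of the image set of `F`. -/
def imSize (p n m : ℕ) [NeZero p] (F : (Fin n → ZMod p) → (Fin m → ZMod p)) : ℕ :=
  (univ.image F).card

/-- The imbalance defect
`Ξ(F) = sqrt((|im F| - 1)(|im F|·Nb_F - p^{2n-m}(p^m - |im F|)))/|im F|`. -/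
noncomputable def xi (p n m : ℕ) [NeZero p]
    (F : (Fin n → ZMod p) → (Fin m → ZMod p)) : ℝ :=
  Real.sqrt (((imSize p n m F : ℝ) - 1) *
      ((imSize p n m F : ℝ) * imbalance p n m F -
        (p : ℝ) ^ (2 * (n : ℤ) - (m : ℤ)) * ((p : ℝ) ^ m - (imSize p n m F : ℝ)))) /
    (imSize p n m F : ℝ)


/-!
Parseval's identity for the characters `x ↦ e(⟨b, x⟩ / p)` turns the imbalance into the second
moment of the fibre sizes: `p^m Nb_F = p^m ∑_β |F⁻¹(β)|² - p^{2n}`. Hence, with `k = |im F|`,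
`(k Ξ(F))² = (k - 1) (k ∑_β |F⁻¹(β)|² - (∑_β |F⁻¹(β)|)²)`, and both claims are Samuelson's
inequality for the `k` numbers `|F⁻¹(β)|`, `β ∈ im F`, whose mean is `p^n / k`: one of `k` reals
deviates from their mean by at most `√(k - 1)` standard deviations, with equality only if the
other `k - 1` are all equal.
-/

open Matrix

namespace AddChar

variable {R ι : Type*} [CommRing R] [Fintype R] [DecidableEq R] [Fintype ι] [DecidableEq ι]
  {ψ : AddChar R ℂ}

theorem sum_dotProduct_eq_ite (hψ : ψ.IsPrimitive) (δ : ι → R) :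
    ∑ b : ι → R, ψ (b ⬝ᵥ δ) = if δ = 0 then (Fintype.card R : ℂ) ^ Fintype.card ι else 0 := by
  split_ifs with hδ
  · simp [hδ]
  obtain ⟨j, hj⟩ := Function.ne_iff.mp hδ
  obtain ⟨c, hc⟩ := ne_one_iff.mp (hψ hj)
  let φ : AddChar (ι → R) ℂ :=
    ψ.compAddMonoidHom (AddMonoidHom.mk' (· ⬝ᵥ δ) fun a b => add_dotProduct a b δ)
  have hφ : φ ≠ 0 := ne_zero_iff.mpr ⟨Pi.single j c, by simpa [φ, mul_comm] using hc⟩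
  simpa [φ] using sum_eq_zero_of_ne_one hφ

theorem sum_norm_sq_sum_dotProduct {X : Type*} [Fintype X] (hψ : ψ.IsPrimitive) (F : X → ι → R) :
    ∑ b : ι → R, ‖∑ x, ψ (b ⬝ᵥ F x)‖ ^ 2
      = (Fintype.card R : ℝ) ^ Fintype.card ι * ∑ β ∈ univ.image F, (#{x | F x = β} : ℝ) ^ 2 := by
  have hexpand (b : ι → R) :
      ((‖∑ x, ψ (b ⬝ᵥ F x)‖ ^ 2 : ℝ) : ℂ) = ∑ x, ∑ y, ψ (b ⬝ᵥ (F x - F y)) := by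
    rw [Complex.ofReal_pow, ← Complex.mul_conj', map_sum, sum_mul_sum]
    simp_rw [← map_neg_eq_conj, ← map_add_eq_mul, dotProduct_sub, sub_eq_add_neg]
  have hcount (x : X) : ∑ b : ι → R, ∑ y, ψ (b ⬝ᵥ (F x - F y))
      = (Fintype.card R : ℂ) ^ Fintype.card ι * #{y | F y = F x} := by
    rw [sum_comm]
    simp_rw [sum_dotProduct_eq_ite hψ, sub_eq_zero, eq_comm (a := F x)]
    rw [sum_ite, sum_const_zero, add_zero, sum_const, nsmul_eq_mul, mul_comm]
  have hfib : ∑ x, (#{y | F y = F x} : ℝ) = ∑ β ∈ univ.image F, (#{x | F x = β} : ℝ) ^ 2 := by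
    simp [sum_comp (fun β => (#{y | F y = β} : ℝ)) F, sq]
  apply Complex.ofReal_injective
  rw [Complex.ofReal_sum, ← hfib]
  simp_rw [hexpand]
  rw [sum_comm]
  simp_rw [hcount]
  push_cast
  rw [mul_sum]

end AddChar

namespace Finset

variable {α : Type*} (s : Finset α) (f : α → ℝ)

/-- `#s ^ 2` times the variance of `f` on `s`. -/
def scaledVariance : ℝ := #s * ∑ a ∈ s, f a ^ 2 - (∑ a ∈ s, f a) ^ 2

theorem scaledVariance_nonneg : 0 ≤ s.scaledVariance f :=
  sub_nonneg.mpr (sq_sum_le_card_mul_sum_sq ..)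

theorem card_mul_scaledVariance :
    #s * s.scaledVariance f = ∑ a ∈ s, (#s * f a - ∑ b ∈ s, f b) ^ 2 := by
  simp only [scaledVariance, sub_sq, mul_pow, sum_add_distrib, sum_sub_distrib, ← sum_mul,
    ← mul_sum, sum_const, nsmul_eq_mul]
  ring

theorem card_mul_eq_sum_of_scaledVariance_eq_zero (h : s.scaledVariance f = 0) {a : α}
    (ha : a ∈ s) : #s * f a = ∑ b ∈ s, f b := by
  have hsum := card_mul_scaledVariance s f
  rw [h, mul_zero, eq_comm, sum_eq_zero_iff_of_nonneg fun _ _ => sq_nonneg _] at hsum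
  exact sub_eq_zero.mp (pow_eq_zero_iff two_ne_zero |>.mp (hsum a ha))

variable {s}

theorem abs_sub_sum_div_card (hs : s.Nonempty) (x : ℝ) :
    |x - (∑ a ∈ s, f a) / #s| = |#s * x - ∑ a ∈ s, f a| / #s := by
  have hpos : (0 : ℝ) < #s := Nat.cast_pos.mpr hs.card_pos
  rw [sub_div' hpos.ne', abs_div, abs_of_pos hpos, mul_comm]

variable [DecidableEq α] {β : α}

theorem card_sub_one_mul_scaledVariance_sub_sq (hβ : β ∈ s) :
    (#s - 1) * s.scaledVariance f - (#s * f β - ∑ a ∈ s, f a) ^ 2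
      = #s * (s.erase β).scaledVariance f := by
  simp only [scaledVariance, ← sum_erase_add s f hβ, ← sum_erase_add s (f · ^ 2) hβ,
    cast_card_erase_of_mem hβ]
  ring

theorem sq_card_mul_sub_sum_le (hβ : β ∈ s) :
    (#s * f β - ∑ a ∈ s, f a) ^ 2 ≤ (#s - 1) * s.scaledVariance f := by
  have := card_sub_one_mul_scaledVariance_sub_sq f hβ
  nlinarith [(s.erase β).scaledVariance_nonneg f]

theorem eq_of_sq_card_mul_sub_sum_eq (hβ : β ∈ s)
    (heq : (#s * f β - ∑ a ∈ s, f a) ^ 2 = (#s - 1) * s.scaledVariance f) {γ : α} (hγ : γ ∈ s)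
    (hγβ : γ ≠ β) : f γ = (∑ a ∈ s, f a - f β) / (#s - 1) := by
  have hγ' : γ ∈ s.erase β := mem_erase.mpr ⟨hγβ, hγ⟩
  have hvar : (s.erase β).scaledVariance f = 0 := by
    have := card_sub_one_mul_scaledVariance_sub_sq f hβ
    rw [heq, sub_self, eq_comm, mul_eq_zero] at this
    exact this.resolve_left (Nat.cast_ne_zero.mpr (card_ne_zero_of_mem hβ))
  have hpos : (0 : ℝ) < #(s.erase β) := Nat.cast_pos.mpr (card_pos.mpr ⟨γ, hγ'⟩)
  rw [← cast_card_erase_of_mem hβ, ← sum_erase_add s f hβ, add_sub_cancel_right,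
    eq_div_iff hpos.ne', mul_comm]
  exact card_mul_eq_sum_of_scaledVariance_eq_zero _ f hvar hγ'

theorem abs_sub_mean_le (hβ : β ∈ s) :
    |f β - (∑ a ∈ s, f a) / #s| ≤ √((#s - 1) * s.scaledVariance f) / #s := by
  rw [abs_sub_sum_div_card f ⟨β, hβ⟩]
  gcongr
  exact Real.abs_le_sqrt (sq_card_mul_sub_sum_le f hβ)

theorem eq_of_abs_sub_mean_eq (hβ : β ∈ s)
    (heq : |f β - (∑ a ∈ s, f a) / #s| = √((#s - 1) * s.scaledVariance f) / #s) {γ : α}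
    (hγ : γ ∈ s) (hγβ : γ ≠ β) : f γ = (∑ a ∈ s, f a - f β) / (#s - 1) := by
  have hcard : (#s : ℝ) ≠ 0 := Nat.cast_ne_zero.mpr (card_ne_zero_of_mem hβ)
  rw [abs_sub_sum_div_card f ⟨β, hβ⟩, div_left_inj' hcard] at heq
  have hnonneg : 0 ≤ (#s - 1 : ℝ) * s.scaledVariance f :=
    (sq_nonneg _).trans (sq_card_mul_sub_sum_le f hβ)
  refine eq_of_sq_card_mul_sub_sum_eq f hβ ?_ hγ hγβ
  rw [← sq_abs, heq, Real.sq_sqrt hnonneg]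

end Finset

section Walsh

variable {p n m : ℕ} [NeZero p] (F : (Fin n → ZMod p) → (Fin m → ZMod p))

theorem walsh_zero_right (b : Fin m → ZMod p) :
    walsh p n m F b 0 = ∑ x, ZMod.stdAddChar (b ⬝ᵥ F x) := by
  simp [walsh, ZMod.stdAddChar_apply, ZMod.toCircle_apply, dotProduct]

theorem sum_norm_sq_walsh_zero_right :
    ∑ b, ‖walsh p n m F b 0‖ ^ 2
      = (p : ℝ) ^ m * ∑ β ∈ univ.image F, (fiberCard p n m F β : ℝ) ^ 2 := by
  simpa [walsh_zero_right, fiberCard] using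
    AddChar.sum_norm_sq_sum_dotProduct (ZMod.isPrimitive_stdAddChar p) F

theorem imbalance_eq :
    imbalance p n m F
      = ∑ β ∈ univ.image F, (fiberCard p n m F β : ℝ) ^ 2 - (p : ℝ) ^ (2 * n) / (p : ℝ) ^ m := by
  have hwalsh : walsh p n m F 0 0 = (p : ℂ) ^ n := by simp [walsh_zero_right]
  have hp : (p : ℝ) ≠ 0 := Nat.cast_ne_zero.mpr (NeZero.ne p)
  rw [imbalance, filter_ne', sum_erase_eq_sub (mem_univ 0), sum_norm_sq_walsh_zero_right, hwalsh,
    norm_pow, Complex.norm_natCast, pow_mul']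
  field_simp

theorem mem_image_of_fiberCard_pos {β : Fin m → ZMod p} (hβ : 0 < fiberCard p n m F β) :
    β ∈ univ.image F := by
  obtain ⟨x, hx⟩ := card_pos.mp hβ
  exact mem_image.mpr ⟨x, mem_univ x, (mem_filter.mp hx).2⟩

theorem sum_fiberCard : ∑ β ∈ univ.image F, (fiberCard p n m F β : ℝ) = (p : ℝ) ^ n :=
  mod_cast (card_eq_sum_card_image F univ).symm.trans (by simp)

theorem xi_eq :
    xi p n m F = √((imSize p n m F - 1) * (univ.image F).scaledVariance (fiberCard p n m F ·)) /
      imSize p n m F := by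
  have hp : (p : ℝ) ≠ 0 := Nat.cast_ne_zero.mpr (NeZero.ne p)
  have hzpow : (p : ℝ) ^ (2 * (n : ℤ) - m) = (p : ℝ) ^ (2 * n) / (p : ℝ) ^ m := by
    rw [zpow_sub₀ hp]
    norm_cast
  rw [xi, imbalance_eq, hzpow, scaledVariance, sum_fiberCard, ← pow_mul', imSize]
  congr 3
  field_simp
  ring

end Walsh

theorem fiberCard_bounds_image_general (p n m : ℕ) [NeZero p]
    (F : (Fin n → ZMod p) → (Fin m → ZMod p)) :
    (∀ β : Fin m → ZMod p, 0 < fiberCard p n m F β →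
      (p : ℝ) ^ n / (imSize p n m F : ℝ) - xi p n m F ≤ (fiberCard p n m F β : ℝ) ∧
      (fiberCard p n m F β : ℝ) ≤ (p : ℝ) ^ n / (imSize p n m F : ℝ) + xi p n m F) ∧
    (∀ β : Fin m → ZMod p, 0 < fiberCard p n m F β →
      ((fiberCard p n m F β : ℝ) = (p : ℝ) ^ n / (imSize p n m F : ℝ) - xi p n m F ∨
       (fiberCard p n m F β : ℝ) = (p : ℝ) ^ n / (imSize p n m F : ℝ) + xi p n m F) →
      ∀ α ∈ univ.image F, α ≠ β →
        (fiberCard p n m F α : ℝ)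
          = ((p : ℝ) ^ n - (fiberCard p n m F β : ℝ)) / ((imSize p n m F : ℝ) - 1)) := by
  have hxi := xi_eq F
  have hxi_nonneg : 0 ≤ xi p n m F := by rw [hxi]; positivity
  rw [← sum_fiberCard F, imSize] at *
  refine ⟨fun β hβ => ?_, fun β hβ hext α hα hαβ => ?_⟩
  · have hdev := abs_sub_mean_le (fiberCard p n m F · : _ → ℝ) (mem_image_of_fiberCard_pos F hβ)
    rw [← hxi, abs_sub_le_iff] at hdev
    constructor <;> linarith
  · refine eq_of_abs_sub_mean_eq (fiberCard p n m F · : _ → ℝ)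
      (mem_image_of_fiberCard_pos F hβ) ?_ hα hαβ
    rw [← hxi, abs_eq hxi_nonneg]
    rcases hext with h | h
    · right; linarith
    · left; linarith

theorem fiberCard_bounds_image (p n m : ℕ) [NeZero p] (hp : p.Prime) (hn : 0 < n) (hm : 0 < m)
    (F : (Fin n → ZMod p) → (Fin m → ZMod p)) :
    (∀ β : Fin m → ZMod p, 0 < fiberCard p n m F β →
      (p : ℝ) ^ n / (imSize p n m F : ℝ) - xi p n m F ≤ (fiberCard p n m F β : ℝ) ∧
      (fiberCard p n m F β : ℝ) ≤ (p : ℝ) ^ n / (imSize p n m F : ℝ) + xi p n m F) ∧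
    (∀ β : Fin m → ZMod p, 0 < fiberCard p n m F β →
      ((fiberCard p n m F β : ℝ) = (p : ℝ) ^ n / (imSize p n m F : ℝ) - xi p n m F ∨
       (fiberCard p n m F β : ℝ) = (p : ℝ) ^ n / (imSize p n m F : ℝ) + xi p n m F) →
      ∀ α ∈ univ.image F, α ≠ β →
        (fiberCard p n m F α : ℝ)
          = ((p : ℝ) ^ n - (fiberCard p n m F β : ℝ)) / ((imSize p n m F : ℝ) - 1)) :=
  fiberCard_bounds_image_general p n m F
end

section
/- Let p be a prime, n, m positive integers with m ≤ n/2, and F : 𝔽_p^n → 𝔽_p^m any function. Then there exists an 𝔽_p-linear map L : 𝔽_p^n → 𝔽_p^m such that F + L is surjective. -/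
/-!
Average over all linear maps `L`. For `x ≠ x'` the value `L (x - x')` is uniformly distributed,
so `F + L` identifies `x` and `x'` for a proportion `1 / |W|` of the maps `L`, and the expected
number of colliding pairs is at most `|V| + |V|² / |W|`. A map `V → W` that misses a point has, by
Cauchy–Schwarz over its at most `|W| - 1` nonempty fibres, at least `|V|² / (|W| - 1)` colliding
pairs, which exceeds that average as soon as `|W|² ≤ |V|`.
-/

open Finset Function

section Collisions

variable {ι X Y : Type*} [Fintype X] [DecidableEq Y]

def collisions (g : X → Y) : Finset (X × X) := {p | g p.1 = g p.2}

theorem sum_card_fiber_sq_eq_card_collisions [Fintype Y] (g : X → Y) :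
    ∑ y, #{x | g x = y} ^ 2 = #(collisions g) := by
  rw [card_eq_sum_card_fiberwise (f := fun p => g p.1) (t := univ) (fun _ _ => mem_univ _)]
  refine sum_congr rfl fun y _ => ?_
  rw [sq, ← card_product]
  congr 1
  ext ⟨x, x'⟩
  simp only [collisions, mem_filter, mem_univ, true_and, mem_product]
  constructor
  · rintro ⟨rfl, hx'⟩; exact ⟨hx'.symm, rfl⟩
  · rintro ⟨hxx', rfl⟩; exact ⟨rfl, hxx'.symm⟩

theorem card_sq_le_mul_card_collisions [Fintype Y] {g : X → Y} (hg : ¬Surjective g) :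
    Fintype.card X ^ 2 ≤ (Fintype.card Y - 1) * #(collisions g) := by
  obtain ⟨y₀, hy₀⟩ : ∃ y₀, ∀ x, g x ≠ y₀ := by simpa [Surjective] using hg
  have hmaps : Set.MapsTo g (univ : Finset X) (univ.erase y₀) := fun x _ => by simp [hy₀ x]
  calc Fintype.card X ^ 2 = (∑ y ∈ univ.erase y₀, #{x | g x = y}) ^ 2 := by
        rw [← card_univ, card_eq_sum_card_fiberwise hmaps]
    _ ≤ #(univ.erase y₀) * ∑ y ∈ univ.erase y₀, #{x | g x = y} ^ 2 :=
        sq_sum_le_card_mul_sum_sq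
    _ ≤ (Fintype.card Y - 1) * #(collisions g) := by
        rw [card_erase_of_mem (mem_univ _), card_univ, ← sum_card_fiber_sq_eq_card_collisions]
        gcongr
        exact erase_subset y₀ univ

theorem sum_card_collisions [Fintype ι] (G : ι → X → Y) :
    ∑ i, #(collisions (G i)) = ∑ p : X × X, #{i | G i p.1 = G i p.2} := by
  simp only [collisions, card_filter]
  exact sum_comm

theorem exists_surjective_of_card_mul_card_collide_le [Fintype ι] [Nonempty ι] [Fintype Y]
    (G : ι → X → Y)
    (hG : ∀ x x', x ≠ x' → Fintype.card Y * #{i | G i x = G i x'} ≤ Fintype.card ι)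
    (hXY : Fintype.card Y ^ 2 ≤ Fintype.card X) :
    ∃ i, Surjective (G i) := by
  classical
  by_contra! hG_not
  cases isEmpty_or_nonempty Y with
  | inl hY => exact hG_not (Classical.arbitrary ι) fun y => isEmptyElim y
  | inr hY => ?_
  set q := Fintype.card Y
  set a := Fintype.card X
  set N := Fintype.card ι
  have hq : 0 < q := Fintype.card_pos
  have ha : 0 < a := lt_of_lt_of_le (pow_pos hq 2) hXY
  have hN : 0 < N := Fintype.card_pos
  have hlower : N * a ^ 2 ≤ (q - 1) * ∑ i, #(collisions (G i)) := by
    calc N * a ^ 2 = ∑ _i : ι, a ^ 2 := by simp [N]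
      _ ≤ (q - 1) * ∑ i, #(collisions (G i)) := by
        rw [mul_sum]
        exact sum_le_sum fun i _ => card_sq_le_mul_card_collisions (hG_not i)
  have hupper : q * ∑ i, #(collisions (G i)) ≤ N * a * (a + q) := by
    have hpair : ∀ p : X × X,
        q * #{i | G i p.1 = G i p.2} ≤ N + if p.1 = p.2 then q * N else 0 := by
      rintro ⟨x, x'⟩
      by_cases h : x = x'
      · rw [if_pos h]
        have : #{i | G i x = G i x'} ≤ N := card_le_univ _
        nlinarith
      · simpa [h] using hG x x' h
    calc q * ∑ i, #(collisions (G i))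
          ≤ ∑ p : X × X, (N + if p.1 = p.2 then q * N else 0) := by
          rw [sum_card_collisions, mul_sum]; exact sum_le_sum fun p _ => hpair p
      _ = N * a * (a + q) := by
          rw [sum_add_distrib]
          simp only [Fintype.sum_prod_type, sum_ite_eq, sum_const, card_univ, smul_eq_mul,
            mem_univ, if_true, Fintype.card_prod]
          simp only [a, N, q]
          ring
  have key : q * a ≤ (q - 1) * (a + q) := by
    refine Nat.le_of_mul_le_mul_left ?_ (Nat.mul_pos hN ha)
    calc N * a * (q * a) = q * (N * a ^ 2) := by ring
      _ ≤ q * ((q - 1) * ∑ i, #(collisions (G i))) := Nat.mul_le_mul_left q hlower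
      _ = (q - 1) * (q * ∑ i, #(collisions (G i))) := by ring
      _ ≤ (q - 1) * (N * a * (a + q)) := Nat.mul_le_mul_left _ hupper
      _ = N * a * ((q - 1) * (a + q)) := by ring
  -- `q * a ≤ (q - 1) * (a + q)` forces `a < q ^ 2`
  obtain ⟨s, hs⟩ : ∃ s, q = s + 1 := ⟨q - 1, by omega⟩
  rw [hs, Nat.add_sub_cancel] at key
  rw [hs] at hXY
  nlinarith

end Collisions

section LinearMaps

variable {K V W : Type*} [Field K] [AddCommGroup V] [Module K V] [AddCommGroup W] [Module K W]

theorem LinearMap.exists_apply_eq_of_ne_zero {z : V} (hz : z ≠ 0) (w : W) :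
    ∃ L : V →ₗ[K] W, L z = w := by
  obtain ⟨φ, hφ⟩ := Module.Projective.exists_dual_ne_zero K hz
  exact ⟨(φ z)⁻¹ • φ.smulRight w, by simp [smul_smul, inv_mul_cancel₀ hφ]⟩

theorem LinearMap.card_mul_card_filter_apply_eq [Fintype W] [DecidableEq W]
    [Fintype (V →ₗ[K] W)] {z : V} (hz : z ≠ 0) (w : W) :
    Fintype.card W * #{L : V →ₗ[K] W | L z = w} = Fintype.card (V →ₗ[K] W) := by
  have hrange : ∀ w', w' ∈ Set.range (LinearMap.applyₗ (R := K) (M₂ := W) z) := fun w' =>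
    LinearMap.exists_apply_eq_of_ne_zero hz w'
  calc Fintype.card W * #{L : V →ₗ[K] W | L z = w}
      = ∑ w' : W, #{L : V →ₗ[K] W | L z = w'} := by
        rw [← card_univ, ← smul_eq_mul, ← sum_const]
        refine sum_congr rfl fun w' _ => ?_
        exact AddMonoidHom.card_fiber_eq_of_mem_range _ (hrange w) (hrange w')
    _ = Fintype.card (V →ₗ[K] W) :=
        (card_eq_sum_card_fiberwise fun L _ => mem_univ (L z)).symm

theorem exists_linearMap_add_surjective [Fintype V] [Fintype W]
    (hVW : Fintype.card W ^ 2 ≤ Fintype.card V) (F : V → W) :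
    ∃ L : V →ₗ[K] W, Surjective (fun x => F x + L x) := by
  classical
  have : Finite (V →ₗ[K] W) := Finite.of_injective _ DFunLike.coe_injective
  have := Fintype.ofFinite (V →ₗ[K] W)
  refine exists_surjective_of_card_mul_card_collide_le (fun (L : V →ₗ[K] W) x => F x + L x)
    (fun x x' hxx' => ?_) hVW
  have hcollide : ∀ L : V →ₗ[K] W, F x + L x = F x' + L x' ↔ L (x - x') = F x' - F x := by
    intro L
    rw [map_sub, sub_eq_sub_iff_add_eq_add, add_comm (L x)]
  simp only [hcollide]
  exact (LinearMap.card_mul_card_filter_apply_eq (sub_ne_zero.mpr hxx') _).le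

end LinearMaps

theorem exists_linear_add_surjective_general (p n m : ℕ) (hp : p.Prime)
    (hmn : 2 * m ≤ n)
    (F : (Fin n → ZMod p) → (Fin m → ZMod p)) :
    ∃ L : (Fin n → ZMod p) →ₗ[ZMod p] (Fin m → ZMod p),
      Function.Surjective (fun x => F x + L x) := by
  have := Fact.mk hp
  refine exists_linearMap_add_surjective ?_ F
  simp only [Fintype.card_fun, ZMod.card, Fintype.card_fin, ← pow_mul]
  exact Nat.pow_le_pow_right hp.pos (by linarith)

theorem exists_linear_add_surjective (p n m : ℕ) [NeZero p] (hp : p.Prime)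
    (hn : 0 < n) (hm : 0 < m) (hmn : 2 * m ≤ n)
    (F : (Fin n → ZMod p) → (Fin m → ZMod p)) :
    ∃ L : (Fin n → ZMod p) →ₗ[ZMod p] (Fin m → ZMod p),
      Function.Surjective (fun x => F x + L x) :=
  exists_linear_add_surjective_general p n m hp hmn F
end

section
/- Let p be a prime, n a positive integer, t > 0, and F : 𝔽_p^n → 𝔽_p^n a t-plateaued function (i.e., every nonzero component of F is t-plateaued). Then the differential uniformity of F is at least p^t. Moreover, the differential uniformity of F equals p^t if and only if F is differentially two-valued with value p^t, i.e., for every a ≠ 0 and every b, the number of solutions x of F(x+a) − F(x) = b lies in {0, p^t}. -/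
/-!
Let `ζ = e^(2πi/p)`, `δ_F(a,b) = #{x | F(x+a) - F(x) = b}`, and for `β ≠ 0` let
`T_β(a) = ∑ₓ ζ^⟨β, F(x+a) - F(x)⟩` be the autocorrelation of `F_β`. Then `|W_F(β,·)|²` is the
Fourier transform of `T_β`, so Parseval gives `∑_α |W_F(β,α)|⁴ = pⁿ ∑_a |T_β(a)|²`; as
`|W_F(β,α)|⁴ = p^(n+t) |W_F(β,α)|²` and `∑_α |W_F(β,α)|² = p^(2n)`, this is
`∑_a |T_β(a)|² = p^(2n+t)`. Parseval in `β` instead gives `∑_β |T_β(a)|² = pⁿ ∑_b δ_F(a,b)²`.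
Summing over `a` and `β` and removing `a = 0` leaves
`∑_{a≠0,b} δ_F(a,b)² = p^t ∑_{a≠0,b} δ_F(a,b)`. As `δ_F(a,b)² ≤ δ(F) δ_F(a,b)`, this forces
`δ(F) ≥ p^t`, with equality exactly when every `δ_F(a,b)` with `a ≠ 0` is `0` or `p^t`.
-/

open Finset

/-- The component `F_b` is `t`-plateaued: `|W_F(b,a)| ∈ {0, p^{(n+t)/2}}` for all `a`. -/
def IsTPlateaued (p n m : ℕ) [NeZero p] (F : (Fin n → ZMod p) → (Fin m → ZMod p))
    (b : Fin m → ZMod p) (t : ℕ) : Prop :=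
  ∀ a : Fin n → ZMod p,
    ‖walsh p n m F b a‖ = 0 ∨
    ‖walsh p n m F b a‖ = Real.sqrt ((p : ℝ) ^ (n + t))

/-- `F` is plateaued: every nonzero component is `t_b`-plateaued for some `t_b`. -/
def IsPlateaued (p n m : ℕ) [NeZero p] (F : (Fin n → ZMod p) → (Fin m → ZMod p)) : Prop :=
  ∀ b : Fin m → ZMod p, b ≠ 0 → ∃ t : ℕ, IsTPlateaued p n m F b t

/-- The number of solutions `x` of `F(x+a) - F(x) = b`. -/
def diffCount (p n : ℕ) [NeZero p] (F : (Fin n → ZMod p) → (Fin n → ZMod p))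
    (a b : Fin n → ZMod p) : ℕ :=
  (univ.filter fun x => F (x + a) - F x = b).card

/-- The differential uniformity `δ(F) = max_{a ≠ 0, b} #{x : F(x+a) - F(x) = b}`. -/
def diffUniformity (p n : ℕ) [NeZero p]
    (F : (Fin n → ZMod p) → (Fin n → ZMod p)) : ℕ :=
  ((univ ×ˢ univ).filter fun ab : (Fin n → ZMod p) × (Fin n → ZMod p) => ab.1 ≠ 0).sup
    fun ab => diffCount p n F ab.1 ab.2

open ZMod ComplexConjugate

namespace Finset

variable {ι : Type*} {s : Finset ι} {f : ι → ℕ} {c : ℕ}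

theorem le_sup_of_sum_sq_eq_mul_sum (hsq : ∑ i ∈ s, f i ^ 2 = c * ∑ i ∈ s, f i)
    (hpos : 0 < ∑ i ∈ s, f i) : c ≤ s.sup f := by
  refine Nat.le_of_mul_le_mul_right ?_ hpos
  rw [← hsq, mul_sum]
  exact sum_le_sum fun i hi => by rw [sq]; exact Nat.mul_le_mul_right _ (le_sup hi)

theorem sup_eq_iff_of_sum_sq_eq_mul_sum (hsq : ∑ i ∈ s, f i ^ 2 = c * ∑ i ∈ s, f i)
    (hpos : 0 < ∑ i ∈ s, f i) : s.sup f = c ↔ ∀ i ∈ s, f i = 0 ∨ f i = c := by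
  constructor
  · intro hsup
    have hle : ∀ i ∈ s, f i * f i ≤ c * f i := fun i hi =>
      Nat.mul_le_mul_right _ (hsup ▸ le_sup hi)
    have heq := (sum_eq_sum_iff_of_le hle).1 (by simpa only [sq, mul_sum] using hsq)
    intro i hi
    rcases Nat.eq_zero_or_pos (f i) with h0 | hfi
    · exact Or.inl h0
    · exact Or.inr (Nat.eq_of_mul_eq_mul_right hfi (heq i hi))
  · intro h
    refine le_antisymm (Finset.sup_le fun i hi => ?_) (le_sup_of_sum_sq_eq_mul_sum hsq hpos)
    rcases h i hi with h | h <;> simp [h]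

theorem sum_filter_fst_ne_zero {α β M : Type*} [Fintype α] [Fintype β] [Zero α]
    [DecidableEq α] [AddCommGroup M] (f : α → β → M) :
    ∑ ab ∈ (univ ×ˢ univ).filter (fun ab : α × β => ab.1 ≠ 0), f ab.1 ab.2 =
      ∑ a, ∑ b, f a b - ∑ b, f 0 b := by
  have hS : (univ ×ˢ univ).filter (fun ab : α × β => ab.1 ≠ 0) = ({0}ᶜ : Finset α) ×ˢ univ := by
    ext; simp
  rw [hS, sum_product, Fintype.sum_eq_add_sum_compl (0 : α) (fun a => ∑ b, f a b),
    add_sub_cancel_left]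

end Finset

theorem AddChar.map_sum_eq_prod {ι A M : Type*} [AddCommMonoid A] [CommMonoid M]
    (ψ : AddChar A M) (s : Finset ι) (f : ι → A) :
    ψ (∑ i ∈ s, f i) = ∏ i ∈ s, ψ (f i) :=
  map_prod ψ.toMonoidHom (fun i => Multiplicative.ofAdd (f i)) s

variable {N n m : ℕ} [NeZero N]

theorem ZMod.conj_stdAddChar (u : ZMod N) : conj (stdAddChar u) = stdAddChar (-u) := by
  rw [stdAddChar_apply, stdAddChar_apply, AddChar.map_neg_eq_inv, Circle.coe_inv_eq_conj]

theorem ZMod.norm_stdAddChar (u : ZMod N) : ‖stdAddChar u‖ = 1 :=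
  Circle.norm_coe _

theorem sum_stdAddChar_dotProduct (y : Fin n → ZMod N) :
    ∑ β : Fin n → ZMod N, stdAddChar (β ⬝ᵥ y) = if y = 0 then (N : ℂ) ^ n else 0 := by
  simp only [dotProduct, AddChar.map_sum_eq_prod]
  rw [← Fintype.prod_sum fun i c => stdAddChar (c * y i)]
  simp only [AddChar.sum_mulShift _ (isPrimitive_stdAddChar N), Nat.cast_ite, Nat.cast_zero,
    Fintype.prod_ite_zero, ZMod.card, prod_const, card_univ, Fintype.card_fin, funext_iff,
    Pi.zero_apply]

theorem sum_norm_sq_sum_mul_stdAddChar (g : (Fin n → ZMod N) → ℂ) :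
    ∑ α : Fin n → ZMod N, ‖∑ x, g x * stdAddChar (α ⬝ᵥ x)‖ ^ 2 = N ^ n * ∑ x, ‖g x‖ ^ 2 := by
  apply Complex.ofReal_injective
  push_cast
  simp only [← Complex.mul_conj', map_sum, map_mul, conj_stdAddChar]
  calc ∑ α, (∑ x, g x * stdAddChar (α ⬝ᵥ x)) * ∑ y, conj (g y) * stdAddChar (-(α ⬝ᵥ y))
      = ∑ x, ∑ y, g x * conj (g y) * ∑ α, stdAddChar (α ⬝ᵥ (x - y)) := by
        simp_rw [sum_mul_sum]
        rw [sum_comm]; refine sum_congr rfl fun x _ => ?_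
        rw [sum_comm]; refine sum_congr rfl fun y _ => ?_
        rw [mul_sum]; refine sum_congr rfl fun α _ => ?_
        rw [dotProduct_sub, sub_eq_add_neg, AddChar.map_add_eq_mul]; ring
    _ = N ^ n * ∑ x, g x * conj (g x) := by
        simp only [sum_stdAddChar_dotProduct, sub_eq_zero, mul_ite, mul_zero, sum_ite_eq,
          mem_univ, if_true, mul_sum]
        simp_rw [mul_comm]

theorem sum_norm_sq_sum_mul_stdAddChar_neg (g : (Fin n → ZMod N) → ℂ) :
    ∑ α : Fin n → ZMod N, ‖∑ x, g x * stdAddChar (-(α ⬝ᵥ x))‖ ^ 2 =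
      N ^ n * ∑ x, ‖g x‖ ^ 2 := by
  rw [← sum_norm_sq_sum_mul_stdAddChar, ← Equiv.sum_comp (Equiv.neg _)]
  simp only [Equiv.neg_apply, neg_dotProduct, neg_neg]

theorem sum_norm_sq_sum_stdAddChar_comp {ι : Type*} [Fintype ι] (G : ι → Fin m → ZMod N) :
    ∑ β : Fin m → ZMod N, ‖∑ x, stdAddChar (β ⬝ᵥ G x)‖ ^ 2 =
      N ^ m * ∑ b, (#{x | G x = b} : ℝ) ^ 2 := by
  have hfiber (β : Fin m → ZMod N) :
      ∑ x, stdAddChar (β ⬝ᵥ G x) = ∑ b, (#{x | G x = b} : ℂ) * stdAddChar (β ⬝ᵥ b) := by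
    rw [← sum_fiberwise univ G]
    refine sum_congr rfl fun b _ => ?_
    rw [sum_congr rfl fun x hx => by rw [(mem_filter.1 hx).2], sum_const, nsmul_eq_mul]
  simp only [hfiber, sum_norm_sq_sum_mul_stdAddChar, Complex.norm_natCast]

theorem walsh_eq_sum_stdAddChar (F : (Fin n → ZMod N) → (Fin m → ZMod N))
    (b : Fin m → ZMod N) (a : Fin n → ZMod N) :
    walsh N n m F b a = ∑ x, stdAddChar (b ⬝ᵥ F x - a ⬝ᵥ x) := by
  refine sum_congr rfl fun x _ => ?_
  rw [← stdAddChar_coe, Int.cast_natCast, ZMod.natCast_zmod_val]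
  rfl

section Walsh

variable (F : (Fin n → ZMod N) → (Fin m → ZMod N))

noncomputable def autocorrelation (β : Fin m → ZMod N) (a : Fin n → ZMod N) : ℂ :=
  ∑ x, stdAddChar (β ⬝ᵥ (F (x + a) - F x))

theorem sum_norm_sq_walsh (β : Fin m → ZMod N) :
    ∑ α, ‖walsh N n m F β α‖ ^ 2 = N ^ (2 * n) := by
  have h (α : Fin n → ZMod N) : walsh N n m F β α =
      ∑ x, stdAddChar (β ⬝ᵥ F x) * stdAddChar (-(α ⬝ᵥ x)) := by
    simp only [walsh_eq_sum_stdAddChar, sub_eq_add_neg, AddChar.map_add_eq_mul]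
  simp only [h, sum_norm_sq_sum_mul_stdAddChar_neg, norm_stdAddChar, one_pow, sum_const,
    card_univ, Fintype.card_fun, ZMod.card, Fintype.card_fin, nsmul_eq_mul, mul_one]
  push_cast
  ring

theorem norm_sq_walsh_eq_sum_autocorrelation (β : Fin m → ZMod N) (α : Fin n → ZMod N) :
    ((‖walsh N n m F β α‖ ^ 2 : ℝ) : ℂ) =
      ∑ a, autocorrelation F β a * stdAddChar (-(α ⬝ᵥ a)) := by
  push_cast
  rw [← Complex.mul_conj', walsh_eq_sum_stdAddChar, map_sum, sum_mul_sum, sum_comm]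
  simp only [autocorrelation, sum_mul]
  conv_rhs => rw [sum_comm]
  refine sum_congr rfl fun y _ => ?_
  rw [← Equiv.sum_comp (Equiv.addLeft y)]
  refine sum_congr rfl fun a _ => ?_
  simp only [Equiv.coe_addLeft]
  rw [conj_stdAddChar, ← AddChar.map_add_eq_mul, ← AddChar.map_add_eq_mul, add_comm y a,
    dotProduct_sub, dotProduct_add]
  congr 1
  abel

theorem sum_norm_pow_four_walsh (β : Fin m → ZMod N) :
    ∑ α, ‖walsh N n m F β α‖ ^ 4 = N ^ n * ∑ a, ‖autocorrelation F β a‖ ^ 2 := by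
  rw [← sum_norm_sq_sum_mul_stdAddChar_neg]
  refine sum_congr rfl fun α _ => ?_
  rw [← norm_sq_walsh_eq_sum_autocorrelation, Complex.norm_real,
    Real.norm_of_nonneg (by positivity)]
  ring

theorem sum_norm_sq_autocorrelation_of_isTPlateaued {β : Fin m → ZMod N} {t : ℕ}
    (hβ : IsTPlateaued N n m F β t) :
    ∑ a, ‖autocorrelation F β a‖ ^ 2 = N ^ (2 * n + t) := by
  have hpow (α : Fin n → ZMod N) :
      ‖walsh N n m F β α‖ ^ 4 = N ^ (n + t) * ‖walsh N n m F β α‖ ^ 2 := by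
    rcases hβ α with h | h
    · simp [h]
    · rw [h, show 4 = 2 * 2 from rfl, pow_mul, Real.sq_sqrt (by positivity)]
      ring
  have hN : (N : ℝ) ^ n ≠ 0 := pow_ne_zero _ (Nat.cast_ne_zero.2 (NeZero.ne N))
  apply mul_left_cancel₀ hN
  rw [← sum_norm_pow_four_walsh, sum_congr rfl fun α _ => hpow α, ← mul_sum, sum_norm_sq_walsh]
  ring

theorem autocorrelation_zero_left (a : Fin n → ZMod N) :
    autocorrelation F 0 a = N ^ n := by
  simp [autocorrelation, ZMod.card]

end Walsh

section Differential

variable (F : (Fin n → ZMod N) → (Fin n → ZMod N))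

theorem sum_norm_sq_autocorrelation_eq_sum_diffCount_sq (a : Fin n → ZMod N) :
    ∑ β, ‖autocorrelation F β a‖ ^ 2 = N ^ n * ∑ b, (diffCount N n F a b : ℝ) ^ 2 :=
  sum_norm_sq_sum_stdAddChar_comp fun x => F (x + a) - F x

theorem sum_diffCount (a : Fin n → ZMod N) : ∑ b, diffCount N n F a b = N ^ n := by
  simp only [diffCount, ← card_eq_sum_card_fiberwise (fun x _ => mem_univ _), card_univ,
    Fintype.card_fun, ZMod.card, Fintype.card_fin]

theorem diffCount_zero_left (b : Fin n → ZMod N) :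
    diffCount N n F 0 b = if b = 0 then N ^ n else 0 := by
  rcases eq_or_ne b 0 with rfl | hb
  · simp [diffCount, ZMod.card]
  · simp [diffCount, hb, Ne.symm hb]

theorem sum_sum_diffCount_sq_of_isTPlateaued {t : ℕ}
    (hplat : ∀ β : Fin n → ZMod N, β ≠ 0 → IsTPlateaued N n n F β t) :
    ∑ a, ∑ b, (diffCount N n F a b : ℝ) ^ 2 = N ^ (2 * n) + (N ^ n - 1) * N ^ (n + t) := by
  have hN : (N : ℝ) ^ n ≠ 0 := pow_ne_zero _ (Nat.cast_ne_zero.2 (NeZero.ne N))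
  apply mul_left_cancel₀ hN
  calc (N : ℝ) ^ n * ∑ a, ∑ b, (diffCount N n F a b : ℝ) ^ 2
      = ∑ β, ∑ a, ‖autocorrelation F β a‖ ^ 2 := by
        rw [mul_sum, sum_comm]
        exact sum_congr rfl fun a _ => (sum_norm_sq_autocorrelation_eq_sum_diffCount_sq F a).symm
    _ = N ^ (3 * n) + ∑ β ∈ ({0}ᶜ : Finset (Fin n → ZMod N)), (N : ℝ) ^ (2 * n + t) := by
        rw [Fintype.sum_eq_add_sum_compl 0]
        congr 1
        · simp only [autocorrelation_zero_left, norm_pow, Complex.norm_natCast, sum_const,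
            card_univ, Fintype.card_fun, ZMod.card, Fintype.card_fin, nsmul_eq_mul]
          push_cast
          ring
        · exact sum_congr rfl fun β hβ =>
            sum_norm_sq_autocorrelation_of_isTPlateaued F (hplat β (by simpa using hβ))
    _ = N ^ n * (N ^ (2 * n) + (N ^ n - 1) * N ^ (n + t)) := by
        rw [sum_const, card_compl, card_singleton, Fintype.card_fun, ZMod.card, Fintype.card_fin,
          nsmul_eq_mul, Nat.cast_sub (Nat.one_le_pow _ _ (Nat.pos_of_neZero N))]
        push_cast
        ring

theorem sum_diffCount_sq_eq_pow_mul_sum {t : ℕ}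
    (hplat : ∀ β : Fin n → ZMod N, β ≠ 0 → IsTPlateaued N n n F β t) :
    ∑ ab ∈ (univ ×ˢ univ).filter (fun ab : (Fin n → ZMod N) × _ => ab.1 ≠ 0),
        diffCount N n F ab.1 ab.2 ^ 2 =
      N ^ t * ∑ ab ∈ (univ ×ˢ univ).filter (fun ab : (Fin n → ZMod N) × _ => ab.1 ≠ 0),
        diffCount N n F ab.1 ab.2 := by
  have hrow (a : Fin n → ZMod N) : ∑ b, (diffCount N n F a b : ℝ) = N ^ n := by
    exact_mod_cast sum_diffCount F a
  have hzero : ∑ b, (diffCount N n F 0 b : ℝ) ^ 2 = N ^ (2 * n) := by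
    simp [diffCount_zero_left, pow_mul']
  apply Nat.cast_injective (R := ℝ)
  push_cast
  rw [mul_comm, sum_filter_fst_ne_zero fun a b => (diffCount N n F a b : ℝ) ^ 2,
    sum_filter_fst_ne_zero fun a b => (diffCount N n F a b : ℝ),
    sum_sum_diffCount_sq_of_isTPlateaued F hplat, hzero]
  simp only [hrow, sum_const, card_univ, Fintype.card_fun, ZMod.card, Fintype.card_fin,
    nsmul_eq_mul]
  push_cast
  ring

theorem sum_diffCount_pos (hN : 1 < N) (hn : 0 < n) :
    0 < ∑ ab ∈ (univ ×ˢ univ).filter (fun ab : (Fin n → ZMod N) × _ => ab.1 ≠ 0),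
      diffCount N n F ab.1 ab.2 := by
  have : Fact (1 < N) := ⟨hN⟩
  have : Nonempty (Fin n) := ⟨⟨0, hn⟩⟩
  obtain ⟨a, ha⟩ := exists_ne (0 : Fin n → ZMod N)
  refine sum_pos' (fun _ _ => Nat.zero_le _) ⟨(a, F (0 + a) - F 0), by simp [ha], ?_⟩
  exact card_pos.2 ⟨0, by simp⟩

end Differential

theorem tPlateaued_diffUniformity_general (p n t : ℕ) [NeZero p] (hp : p.Prime) (hn : 0 < n)
    (F : (Fin n → ZMod p) → (Fin n → ZMod p))
    (hplat : ∀ b : Fin n → ZMod p, b ≠ 0 → IsTPlateaued p n n F b t) :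
    p ^ t ≤ diffUniformity p n F ∧
    (diffUniformity p n F = p ^ t ↔
      ∀ a : Fin n → ZMod p, a ≠ 0 → ∀ b : Fin n → ZMod p,
        diffCount p n F a b = 0 ∨ diffCount p n F a b = p ^ t) := by
  have hsq := sum_diffCount_sq_eq_pow_mul_sum F hplat
  have hpos := sum_diffCount_pos F hp.one_lt hn
  refine ⟨le_sup_of_sum_sq_eq_mul_sum hsq hpos, ?_⟩
  rw [diffUniformity, sup_eq_iff_of_sum_sq_eq_mul_sum hsq hpos]
  simp only [mem_filter, mem_product, mem_univ, true_and, Prod.forall]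
  exact forall_congr' fun a => ⟨fun h ha b => h b ha, fun h b ha => h ha b⟩

theorem tPlateaued_diffUniformity (p n t : ℕ) [NeZero p] (hp : p.Prime) (hn : 0 < n)
    (ht : 0 < t)
    (F : (Fin n → ZMod p) → (Fin n → ZMod p))
    (hplat : ∀ b : Fin n → ZMod p, b ≠ 0 → IsTPlateaued p n n F b t) :
    p ^ t ≤ diffUniformity p n F ∧
    (diffUniformity p n F = p ^ t ↔
      ∀ a : Fin n → ZMod p, a ≠ 0 → ∀ b : Fin n → ZMod p,
        diffCount p n F a b = 0 ∨ diffCount p n F a b = p ^ t) :=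
  tPlateaued_diffUniformity_general p n t hp hn F hplat
end

section
/- Let m be a positive integer, K a finite field with 2^m elements, π : K → K a 2-to-1 map (every fiber of π has size 0 or 2), and φ : K → K any map. Define F : K × K → K by F(x,y) = x·π(y) + φ(y), and assume F is plateaued with single amplitude 2^{m+1}. Then: (1) if 0 ∉ im(π), F is balanced, i.e., |F⁻¹(α)| = 2^m for all α ∈ K; (2) if π(y₁) = π(y₂) = 0 for distinct y₁, y₂ ∈ K and φ(y₁) = φ(y₂) = β, then |F⁻¹(β)| = 2^m + 2(2^m − 1) and |F⁻¹(α)| = 2^m − 2 for every α ≠ β; (3) if π(y₁) = π(y₂) = 0 for distinct y₁, y₂ ∈ K and β₁ := φ(y₁) ≠ φ(y₂) =: β₂, then |F⁻¹(β₁)| = |F⁻¹(β₂)| = 2^{m+1} − 2 and |F⁻¹(α)| = 2^m − 2 for every α ∉ {β₁, β₂}. -/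
/-!
For fixed `y`, the map `x ↦ x * π y + φ y` is a bijection of `K` when `π y ≠ 0` and the constant
`φ y` when `π y = 0`. Hence every value `α` is taken once for each `y` outside the zero set of `π`,
and `|K|` times for each zero `y` of `π` with `φ y = α`. A 2-to-1 map has either no zeros or exactly
two, and the three value distributions follow by counting.
-/

open Finset

/-- The (integer-valued) Walsh transform of `F : K × K → K` for a finite field `K` of
characteristic 2: `W_F(b,(a₁,a₂)) = ∑_{x,y} (-1)^{tr(b·F(x,y)) + tr(a₁·x + a₂·y)}`. -/
noncomputable def walshMM (K : Type*) [Field K] [Fintype K] [Algebra (ZMod 2) K]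
    (F : K × K → K) (b : K) (a : K × K) : ℤ :=
  ∑ xy : K × K, (-1 : ℤ) ^
    ((Algebra.trace (ZMod 2) K (b * F xy)).val +
      (Algebra.trace (ZMod 2) K (a.1 * xy.1 + a.2 * xy.2)).val)

section

variable {K : Type*} [DivisionRing K] [Fintype K] [DecidableEq K]

theorem card_filter_mul_add_eq (c d α : K) :
    #{x | x * c + d = α} = if c = 0 then if d = α then Fintype.card K else 0 else 1 := by
  split_ifs with hc hd
  · simp [hc, hd]
  · simp [hc, hd]
  · rw [card_eq_one]
    exact ⟨(α - d) / c, by ext x; simp [eq_div_iff hc, eq_sub_iff_add_eq]⟩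

theorem card_fiber_mul_add (π φ : K → K) (α : K) :
    #{xy : K × K | xy.1 * π xy.2 + φ xy.2 = α}
      = Fintype.card K * #{y | π y = 0 ∧ φ y = α} + #{y | π y ≠ 0} := by
  rw [card_filter, Fintype.sum_prod_type_right]
  simp only [← card_filter, card_filter_mul_add_eq]
  rw [card_filter, card_filter, mul_sum, ← sum_add_distrib]
  refine sum_congr rfl fun y _ => ?_
  by_cases hy : π y = 0 <;> by_cases hφ : φ y = α <;> simp [hy, hφ]

theorem fiber_eq_pair_of_two_to_one {ι β : Type*} [Fintype ι] [DecidableEq ι] [DecidableEq β]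
    {f : ι → β} (hf : ∀ z, #{y | f y = z} = 0 ∨ #{y | f y = z} = 2)
    {y₁ y₂ : ι} (hne : y₁ ≠ y₂) (h : f y₁ = f y₂) :
    ({y | f y = f y₁} : Finset ι) = {y₁, y₂} := by
  have hsub : ({y₁, y₂} : Finset ι) ⊆ ({y | f y = f y₁} : Finset ι) := by
    simp [insert_subset_iff, h]
  have hcard : #({y₁, y₂} : Finset ι) = 2 := card_pair hne
  refine (eq_of_subset_of_card_le hsub ?_).symm
  rcases hf (f y₁) with h0 | h2
  · have := card_le_card hsub
    omega
  · omega

theorem card_fiber_mul_add_of_zeros_eq_pair (π φ : K → K) {y₁ y₂ : K} (hne : y₁ ≠ y₂)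
    (hzeros : ({y | π y = 0} : Finset K) = {y₁, y₂}) (α : K) :
    #{xy : K × K | xy.1 * π xy.2 + φ xy.2 = α}
      = Fintype.card K * ((if φ y₁ = α then 1 else 0) + if φ y₂ = α then 1 else 0)
        + (Fintype.card K - 2) := by
  have hnonzeros : #{y | π y ≠ 0} = Fintype.card K - 2 := by
    rw [filter_not, card_sdiff_of_subset (filter_subset _ _), hzeros, card_pair hne, card_univ]
  rw [card_fiber_mul_add, hnonzeros, ← filter_filter, hzeros, filter_insert, filter_singleton]
  split_ifs <;> simp [hne]

end

theorem maiorana_mcfarland_value_distribution_general (m : ℕ)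
    (K : Type*) [Field K] [Fintype K] [DecidableEq K]
    (hK : Fintype.card K = 2 ^ m)
    (π φ : K → K)
    (hπ : ∀ z : K, (univ.filter fun y => π y = z).card = 0 ∨
                   (univ.filter fun y => π y = z).card = 2)
    (F : K × K → K) (hF : ∀ xy : K × K, F xy = xy.1 * π xy.2 + φ xy.2) :
    ((0 : K) ∉ Set.range π →
      ∀ α : K, (univ.filter fun xy : K × K => F xy = α).card = 2 ^ m) ∧
    (∀ y₁ y₂ : K, y₁ ≠ y₂ → π y₁ = 0 → π y₂ = 0 → φ y₁ = φ y₂ →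
      (univ.filter fun xy : K × K => F xy = φ y₁).card = 2 ^ m + 2 * (2 ^ m - 1) ∧
      ∀ α : K, α ≠ φ y₁ →
        (univ.filter fun xy : K × K => F xy = α).card = 2 ^ m - 2) ∧
    (∀ y₁ y₂ : K, y₁ ≠ y₂ → π y₁ = 0 → π y₂ = 0 → φ y₁ ≠ φ y₂ →
      (univ.filter fun xy : K × K => F xy = φ y₁).card = 2 ^ (m + 1) - 2 ∧
      (univ.filter fun xy : K × K => F xy = φ y₂).card = 2 ^ (m + 1) - 2 ∧
      ∀ α : K, α ≠ φ y₁ → α ≠ φ y₂ →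
        (univ.filter fun xy : K × K => F xy = α).card = 2 ^ m - 2) := by
  obtain rfl : F = fun xy => xy.1 * π xy.2 + φ xy.2 := funext hF
  have h2 : 2 ≤ 2 ^ m := hK ▸ Fintype.one_lt_card
  have hzeros {y₁ y₂ : K} (hne : y₁ ≠ y₂) (h₁ : π y₁ = 0) (h₂ : π y₂ = 0) :
      ({y | π y = 0} : Finset K) = {y₁, y₂} :=
    h₁ ▸ fiber_eq_pair_of_two_to_one hπ hne (h₁.trans h₂.symm)
  refine ⟨fun h0 α => ?_, fun y₁ y₂ hne h₁ h₂ hφ => ?_, fun y₁ y₂ hne h₁ h₂ hφ => ?_⟩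
  · have hπ0 (y : K) : π y ≠ 0 := fun hy => h0 ⟨y, hy⟩
    simp [card_fiber_mul_add, hπ0, hK]
  · simp only [card_fiber_mul_add_of_zeros_eq_pair π φ hne (hzeros hne h₁ h₂), hK, hφ]
    refine ⟨by simp; omega, fun α hα => ?_⟩
    simp [hα.symm]
  · simp only [card_fiber_mul_add_of_zeros_eq_pair π φ hne (hzeros hne h₁ h₂), hK]
    refine ⟨by simp [hφ.symm]; omega, by simp [hφ]; omega, fun α hα₁ hα₂ => ?_⟩
    simp [Ne.symm hα₁, Ne.symm hα₂]

theorem maiorana_mcfarland_value_distribution (m : ℕ) (hm : 0 < m)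
    (K : Type*) [Field K] [Fintype K] [DecidableEq K]
    [Algebra (ZMod 2) K] (hK : Fintype.card K = 2 ^ m)
    (π φ : K → K)
    (hπ : ∀ z : K, (univ.filter fun y => π y = z).card = 0 ∨
                   (univ.filter fun y => π y = z).card = 2)
    (F : K × K → K) (hF : ∀ xy : K × K, F xy = xy.1 * π xy.2 + φ xy.2)
    (hplat : ∀ b : K, b ≠ 0 → ∀ a : K × K,
      (walshMM K F b a).natAbs = 0 ∨ (walshMM K F b a).natAbs = 2 ^ (m + 1)) :
    ((0 : K) ∉ Set.range π →
      ∀ α : K, (univ.filter fun xy : K × K => F xy = α).card = 2 ^ m) ∧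
    (∀ y₁ y₂ : K, y₁ ≠ y₂ → π y₁ = 0 → π y₂ = 0 → φ y₁ = φ y₂ →
      (univ.filter fun xy : K × K => F xy = φ y₁).card = 2 ^ m + 2 * (2 ^ m - 1) ∧
      ∀ α : K, α ≠ φ y₁ →
        (univ.filter fun xy : K × K => F xy = α).card = 2 ^ m - 2) ∧
    (∀ y₁ y₂ : K, y₁ ≠ y₂ → π y₁ = 0 → π y₂ = 0 → φ y₁ ≠ φ y₂ →
      (univ.filter fun xy : K × K => F xy = φ y₁).card = 2 ^ (m + 1) - 2 ∧
      (univ.filter fun xy : K × K => F xy = φ y₂).card = 2 ^ (m + 1) - 2 ∧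
      ∀ α : K, α ≠ φ y₁ → α ≠ φ y₂ →
        (univ.filter fun xy : K × K => F xy = α).card = 2 ^ m - 2) :=
  maiorana_mcfarland_value_distribution_general m K hK π φ hπ F hF
end

section
/- Let m be a positive integer, K a finite field with 2^m elements, π a permutation of K, y* ∈ K the element with π(y*) = 0, and i a positive integer coprime with m. Define F : K × K → K × K by F(x,y) = (x·π(y), x·π(y)^{2^i}). Then |F⁻¹((0,0))| = 2^{m+1} − 1, and |F⁻¹(α)| = 1 for every α in the image of F with α ≠ (0,0). -/
/-!
The zero fibre is `{x = 0} ∪ {y = y*}`. Off it, `a = x π(y) ≠ 0` and `b = x π(y)^(2^i)` give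
`π(y)^(2^i - 1) = b / a`, and `t ↦ t^(2^i - 1)` is injective on `Kˣ` because
`gcd(2^i - 1, 2^m - 1) = 2^gcd(i, m) - 1 = 1`; so `π(y)`, hence `y` and `x`, are determined.
-/

open Finset

theorem Nat.Coprime.two_pow_sub_one {m i : ℕ} (h : m.Coprime i) :
    (2 ^ m - 1).Coprime (2 ^ i - 1) := by
  rw [Nat.Coprime, Nat.pow_sub_one_gcd_pow_sub_one, h.gcd_eq_one, pow_one]

theorem FiniteField.pow_injOn_of_coprime {K : Type*} [Field K] [Finite K] {n : ℕ}
    (h : (Nat.card K - 1).Coprime n) : Set.InjOn (· ^ n) {a : K | a ≠ 0} := by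
  intro a ha b hb hab
  have hunits : (Nat.card Kˣ).Coprime n := by rwa [Nat.card_units]
  have := hunits.pow_left_bijective.injective (a₁ := Units.mk0 a ha) (a₂ := Units.mk0 b hb)
    (Units.ext (by simpa using hab))
  simpa using congrArg Units.val this

theorem card_filter_fst_eq_or_snd_eq {α β : Type*} [Fintype α] [Fintype β] [DecidableEq α]
    [DecidableEq β] (a : α) (b : β) :
    #{p : α × β | p.1 = a ∨ p.2 = b} = Fintype.card β + Fintype.card α - 1 := by
  have hfst : ({p | p.1 = a} : Finset (α × β)) = {a} ×ˢ univ := by ext ⟨x, y⟩; simp [eq_comm]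
  have hsnd : ({p | p.2 = b} : Finset (α × β)) = univ ×ˢ {b} := by ext ⟨x, y⟩; simp [eq_comm]
  have hboth : ({p | p.1 = a ∧ p.2 = b} : Finset (α × β)) = {(a, b)} := by
    ext; simp [Prod.ext_iff]
  rw [filter_or, card_union, ← filter_and, hfst, hsnd, hboth]
  simp

theorem eq_and_eq_of_mul_eq_of_mul_pow_succ_eq {K : Type*} [Field K] {n : ℕ}
    (hn : Set.InjOn (· ^ n) {a : K | a ≠ 0}) {x x' u u' : K} (h0 : x * u ≠ 0)
    (h1 : x * u = x' * u') (h2 : x * u ^ (n + 1) = x' * u' ^ (n + 1)) : x = x' ∧ u = u' := by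
  have hu : u ≠ 0 := right_ne_zero_of_mul h0
  have hu' : u' ≠ 0 := right_ne_zero_of_mul (h1 ▸ h0)
  have hpow : u ^ n = u' ^ n := by
    rw [pow_succ', pow_succ', ← mul_assoc, ← mul_assoc, ← h1] at h2
    exact mul_left_cancel₀ h0 h2
  have hu_eq : u = u' := hn hu hu' hpow
  exact ⟨mul_right_cancel₀ hu (hu_eq ▸ h1), hu_eq⟩

theorem maiorana_mcfarland_pair_value_distribution_general (m i : ℕ)
    (hcop : Nat.Coprime i m)
    (K : Type*) [Field K] [Fintype K] [DecidableEq K] (hK : Fintype.card K = 2 ^ m)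
    (π : K → K) (hπ : Function.Bijective π)
    (ystar : K) (hystar : π ystar = 0)
    (F : K × K → K × K)
    (hF : ∀ xy : K × K, F xy = (xy.1 * π xy.2, xy.1 * (π xy.2) ^ (2 ^ i))) :
    (univ.filter fun xy : K × K => F xy = (0, 0)).card = 2 ^ (m + 1) - 1 ∧
    ∀ α ∈ Set.range F, α ≠ (0, 0) →
      (univ.filter fun xy : K × K => F xy = α).card = 1 := by
  have hq : 2 ^ i = (2 ^ i - 1) + 1 := (Nat.sub_add_cancel Nat.one_le_two_pow).symm
  have hzero : ∀ xy : K × K, F xy = (0, 0) ↔ xy.1 = 0 ∨ xy.2 = ystar := fun xy => by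
    simp [hF, ← hπ.injective.eq_iff' hystar]
  constructor
  · rw [filter_congr fun xy _ => hzero xy, card_filter_fst_eq_or_snd_eq, hK, pow_succ]
    omega
  · rintro _ ⟨xy₀, rfl⟩ hne
    have hinj : Set.InjOn (· ^ (2 ^ i - 1)) {a : K | a ≠ 0} :=
      FiniteField.pow_injOn_of_coprime (by
        rw [Nat.card_eq_fintype_card, hK]; exact hcop.symm.two_pow_sub_one)
    rw [card_eq_one]
    refine ⟨xy₀, eq_singleton_iff_unique_mem.mpr ⟨by simp, fun xy hxy => ?_⟩⟩
    obtain ⟨x, y⟩ := xy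
    obtain ⟨x₀, y₀⟩ := xy₀
    have h0 : x₀ * π y₀ ≠ 0 := by
      simpa [hzero, ← hπ.injective.eq_iff' hystar] using hne
    simp only [mem_filter, mem_univ, true_and, hF, Prod.mk.injEq] at hxy
    rw [hq] at hxy
    obtain ⟨hx, hy⟩ := eq_and_eq_of_mul_eq_of_mul_pow_succ_eq hinj h0 hxy.1.symm hxy.2.symm
    rw [hx, hπ.injective hy]

theorem maiorana_mcfarland_pair_value_distribution (m i : ℕ) (hm : 0 < m) (hi : 0 < i)
    (hcop : Nat.Coprime i m)
    (K : Type*) [Field K] [Fintype K] [DecidableEq K] (hK : Fintype.card K = 2 ^ m)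
    (π : K → K) (hπ : Function.Bijective π)
    (ystar : K) (hystar : π ystar = 0)
    (F : K × K → K × K)
    (hF : ∀ xy : K × K, F xy = (xy.1 * π xy.2, xy.1 * (π xy.2) ^ (2 ^ i))) :
    (univ.filter fun xy : K × K => F xy = (0, 0)).card = 2 ^ (m + 1) - 1 ∧
    ∀ α ∈ Set.range F, α ≠ (0, 0) →
      (univ.filter fun xy : K × K => F xy = α).card = 1 :=
  maiorana_mcfarland_pair_value_distribution_general m i hcop K hK π hπ ystar hystar F hF
end
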